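/- arXiv:0707.2663 — 2 statements merged into one kernel-verified Lean document; each statement's English description precedes it below -/
import Mathlib

section
/- Define recursively, for a sequence of obstacles in the deterministic dynamic-programming analogue: Y^{i,0}(t) = ∫_t^T ψ_i(s) ds, and Y^{i,n}(t) = sup_{τ ∈ [t,T]} ( ∫_t^τ ψ_i(s) ds + max_{j ≠ i}(−ℓ_{ij}(τ) + Y^{j,n−1}(τ)) · 1_{τ < T} ), where ψ_i : [0,T] → ℝ are continuous and ℓ_{ij} : [0,T] → ℝ are continuous with ℓ_{ij} ≥ γ > 0. Then for every i and every t ∈ [0,T], the sequence n ↦ Y^{i,n}(t) is nondecreasing and satisfies Y^{i,n}(t) ≤ ∫_t^T max_{j ∈ J} |ψ_j(s)| ds. -/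
open Set intervalIntegral

theorem stmt6 (q : ℕ) (hq : 2 ≤ q) (T : ℝ) (hT : 0 < T) (γ : ℝ) (hγ : 0 < γ)
    (ψ : Fin q → ℝ → ℝ) (hψ : ∀ i, ContinuousOn (ψ i) (Icc 0 T))
    (ℓ : Fin q → Fin q → ℝ → ℝ) (hℓc : ∀ i j, ContinuousOn (ℓ i j) (Icc 0 T))
    (hℓ : ∀ i j : Fin q, i ≠ j → ∀ t ∈ Icc (0:ℝ) T, γ ≤ ℓ i j t)
    (Y : Fin q → ℕ → ℝ → ℝ)
    (hY0 : ∀ i, ∀ t ∈ Icc (0:ℝ) T, Y i 0 t = ∫ s in t..T, ψ i s)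
    (hYrec : ∀ i n, ∀ t ∈ Icc (0:ℝ) T, Y i (n + 1) t =
      sSup ((fun τ => (∫ s in t..τ, ψ i s) +
        (if τ < T then sSup {x : ℝ | ∃ j, j ≠ i ∧ x = -ℓ i j τ + Y j n τ} else 0)) ''
          Icc t T)) :
    ∀ i, ∀ t ∈ Icc (0:ℝ) T,
      Monotone (fun n => Y i n t) ∧
        ∀ n, Y i n t ≤ ∫ s in t..T, ⨆ j, |ψ j s| := by
  haveI : Nonempty (Fin q) := Fin.pos_iff_nonempty.mp (by omega)
  haveI : Nontrivial (Fin q) := Fin.nontrivial_iff_two_le.mpr hq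
  set g : ℝ → ℝ := fun s => ⨆ j, |ψ j s| with hgdef
  -- continuity of g on [0,T]
  have hgc : ContinuousOn g (Icc 0 T) := by
    have h1 : ContinuousOn (fun a => Finset.univ.sup' Finset.univ_nonempty
        (fun j : Fin q => |ψ j a|)) (Icc 0 T) :=
      ContinuousOn.finset_sup'_apply Finset.univ_nonempty (fun j _ => (hψ j).abs)
    exact h1.congr fun s _ => (Finset.sup'_univ_eq_ciSup _).symm
  -- pointwise bounds
  have hψle : ∀ i s, ψ i s ≤ g s := fun i s =>
    (le_abs_self _).trans (le_ciSup (f := fun j => |ψ j s|) (Set.Finite.bddAbove (Set.finite_range _)) i)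
  have hg0 : ∀ s, 0 ≤ g s := fun s =>
    (abs_nonneg (ψ (Classical.arbitrary _) s)).trans
      (le_ciSup (f := fun j => |ψ j s|) (Set.Finite.bddAbove (Set.finite_range _)) (Classical.arbitrary _))
  -- integrability helper
  have hci : ∀ f : ℝ → ℝ, ContinuousOn f (Icc 0 T) → ∀ a ∈ Icc (0:ℝ) T, ∀ b ∈ Icc (0:ℝ) T,
      IntervalIntegrable f MeasureTheory.volume a b := fun f hf a ha b hb =>
    (hf.mono (uIcc_subset_Icc ha hb)).intervalIntegrable
  -- nonemptiness of the obstacle set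
  have hSne : ∀ (m : ℕ) (i : Fin q) (τ : ℝ),
      Set.Nonempty {x : ℝ | ∃ j, j ≠ i ∧ x = -ℓ i j τ + Y j m τ} := by
    intro m i τ
    obtain ⟨j, hj⟩ := exists_ne i
    exact ⟨_, j, hj, rfl⟩
  -- core element bound, parametric in the induction hypothesis
  have helem : ∀ (n : ℕ) (i : Fin q),
      (∀ j, ∀ τ ∈ Icc (0:ℝ) T, Y j n τ ≤ ∫ s in τ..T, g s) →
      ∀ t ∈ Icc (0:ℝ) T, ∀ τ ∈ Icc t T,
      (∫ s in t..τ, ψ i s) +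
        (if τ < T then sSup {x : ℝ | ∃ j, j ≠ i ∧ x = -ℓ i j τ + Y j n τ} else 0)
        ≤ ∫ s in t..T, g s := by
    intro n i hb t ht τ hτ
    have hτ0T : τ ∈ Icc (0:ℝ) T := ⟨ht.1.trans hτ.1, hτ.2⟩
    have hsplit : (∫ s in t..τ, g s) + ∫ s in τ..T, g s = ∫ s in t..T, g s :=
      integral_add_adjacent_intervals (hci g hgc t ht τ hτ0T)
        (hci g hgc τ hτ0T T (right_mem_Icc.mpr hT.le))
    have h1 : (∫ s in t..τ, ψ i s) ≤ ∫ s in t..τ, g s :=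
      integral_mono_on hτ.1 (hci _ (hψ i) t ht τ hτ0T) (hci g hgc t ht τ hτ0T)
        (fun s _ => hψle i s)
    have h2 : (if τ < T then sSup {x : ℝ | ∃ j, j ≠ i ∧ x = -ℓ i j τ + Y j n τ} else 0)
        ≤ ∫ s in τ..T, g s := by
      have hnn : (0:ℝ) ≤ ∫ s in τ..T, g s :=
        intervalIntegral.integral_nonneg hτ.2 (fun u _ => hg0 u)
      split
      · apply csSup_le (hSne n i τ)
        rintro x ⟨j, hj, rfl⟩
        have hYb := hb j τ hτ0T
        have hℓb := hℓ i j (Ne.symm hj) τ hτ0T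
        linarith
      · exact hnn
    linarith
  -- the uniform bound
  have key : ∀ (n : ℕ) (i : Fin q), ∀ t ∈ Icc (0:ℝ) T, Y i n t ≤ ∫ s in t..T, g s := by
    intro n
    induction n with
    | zero =>
      intro i t ht
      rw [hY0 i t ht]
      exact integral_mono_on ht.2 (hci _ (hψ i) t ht T (right_mem_Icc.mpr hT.le))
        (hci g hgc t ht T (right_mem_Icc.mpr hT.le)) (fun s _ => hψle i s)
    | succ n ih =>
      intro i t ht
      rw [hYrec i n t ht]
      apply csSup_le ((nonempty_Icc.mpr ht.2).image _)
      rintro x ⟨τ, hτ, rfl⟩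
      exact helem n i ih t ht τ hτ
  -- bound on elements of the obstacle set
  have hbS : ∀ (m : ℕ) (i : Fin q) (τ : ℝ), τ ∈ Icc (0:ℝ) T →
      ∀ x ∈ {x : ℝ | ∃ j, j ≠ i ∧ x = -ℓ i j τ + Y j m τ}, x ≤ ∫ s in τ..T, g s := by
    rintro m i τ hτ x ⟨j, hj, rfl⟩
    have hYb := key m j τ hτ
    have hℓb := hℓ i j (Ne.symm hj) τ hτ
    linarith
  -- bounded above image
  have hbImg : ∀ (n : ℕ) (i : Fin q), ∀ t ∈ Icc (0:ℝ) T,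
      BddAbove ((fun τ => (∫ s in t..τ, ψ i s) +
        (if τ < T then sSup {x : ℝ | ∃ j, j ≠ i ∧ x = -ℓ i j τ + Y j n τ} else 0)) ''
          Icc t T) := by
    intro n i t ht
    refine ⟨∫ s in t..T, g s, ?_⟩
    rintro x ⟨τ, hτ, rfl⟩
    exact helem n i (key n) t ht τ hτ
  -- step of monotonicity
  have step : ∀ (n : ℕ) (i : Fin q), ∀ t ∈ Icc (0:ℝ) T, Y i n t ≤ Y i (n + 1) t := by
    intro n
    induction n with
    | zero =>
      intro i t ht
      rw [hYrec i 0 t ht]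
      have hmem : (fun τ => (∫ s in t..τ, ψ i s) +
          (if τ < T then sSup {x : ℝ | ∃ j, j ≠ i ∧ x = -ℓ i j τ + Y j 0 τ} else 0)) T
          ∈ ((fun τ => (∫ s in t..τ, ψ i s) +
          (if τ < T then sSup {x : ℝ | ∃ j, j ≠ i ∧ x = -ℓ i j τ + Y j 0 τ} else 0)) ''
            Icc t T) := Set.mem_image_of_mem _ (right_mem_Icc.mpr ht.2)
      have := le_csSup (hbImg 0 i t ht) hmem
      simpa [hY0 i t ht] using this
    | succ n ih =>
      intro i t ht
      rw [hYrec i n t ht, hYrec i (n + 1) t ht]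
      apply csSup_le ((nonempty_Icc.mpr ht.2).image _)
      rintro x ⟨τ, hτ, rfl⟩
      have hτ0T : τ ∈ Icc (0:ℝ) T := ⟨ht.1.trans hτ.1, hτ.2⟩
      refine le_trans ?_ (le_csSup (hbImg (n + 1) i t ht) (Set.mem_image_of_mem _ hτ))
      simp only
      gcongr ?_ + ?_
      · exact le_rfl
      · split
        · apply csSup_le (hSne n i τ)
          rintro x ⟨j, hj, rfl⟩
          refine le_trans ?_ (le_csSup ⟨_, hbS (n + 1) i τ hτ0T⟩ ⟨j, hj, rfl⟩)
          have := ih j τ hτ0T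
          linarith
        · exact le_rfl
  intro i t ht
  exact ⟨monotone_nat_of_le_succ (fun n => step n i t ht), fun n => key n i t ht⟩
end

section
/- Let g : [0,T] → ℝ be continuous and define v(t) = sup_{τ ∈ [t,T]} ( ∫_t^τ ψ(s)ds + g(τ)·1_{τ<T} ) where ψ : [0,T] → ℝ is continuous and g(T⁻)·1 is replaced by 0 at τ = T. If g(T) < 0 (i.e., the obstacle jumps upward at T since it is replaced by 0), then v is continuous on [0,T] and v(T) = 0. -/
/-! With `F` the primitive of `ψ` from `0`, stopping at `τ` yields `F τ + g τ - F t` for `τ < T`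
and `F T - F t` at `τ = T`. Since `g T < 0`, the value `F T + g T` of the continuous obstacle at `T`
is dominated by the jump value `F T`, so `v t = max (sup_{[t, T]} (F + g)) (F T) - F t`.
The running supremum of a continuous function on a compact interval is continuous, hence so is `v`,
and at `t = T` the maximum is `F T`. -/

open Set intervalIntegral

lemma ContinuousOn.sSup_image_Icc_right {G : ℝ → ℝ} {a b : ℝ}
    (hG : ContinuousOn G (Icc a b)) :
    ContinuousOn (fun t => sSup (G '' Icc t b)) (Icc a b) := by
  rcases lt_or_ge b a with hba | hab
  · simp [Icc_eq_empty_of_lt hba]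
  -- Parametrise `[t, b]` as `max t '' [a, b]`: a jointly continuous family over a fixed compact.
  set G' := IccExtend hab ((Icc a b).domRestrict G)
  have hG' : Continuous G' := hG.domRestrict.Icc_extend'
  have hcont := isCompact_Icc.continuous_sSup (f := fun t s => G' (max t s)) (K := Icc a b)
    (hG'.comp (continuous_fst.max continuous_snd))
  refine hcont.continuousOn.congr fun t ht => ?_
  have hmax : max t '' Icc a b = Icc t b := by
    ext s
    constructor
    · rintro ⟨s, hs, rfl⟩
      exact ⟨le_max_left _ _, max_le ht.2 hs.2⟩
    · intro hs
      exact ⟨s, ⟨ht.1.trans hs.1, hs.2⟩, max_eq_right hs.1⟩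
  show sSup (G '' Icc t b) = sSup ((G' ∘ max t) '' Icc a b)
  rw [image_comp, hmax]
  refine congrArg sSup (image_congr fun s (hs : s ∈ Icc t b) => ?_).symm
  exact IccExtend_of_mem hab _ ⟨ht.1.trans hs.1, hs.2⟩

lemma isLUB_image_ite_lt {G : ℝ → ℝ} {t T c s : ℝ} (htT : t ≤ T)
    (hs : IsLUB (G '' Icc t T) s) (hc : G T ≤ c) :
    IsLUB ((fun τ => if τ < T then G τ else c) '' Icc t T) (max s c) := by
  refine ⟨?_, fun b hb => max_le (hs.2 ?_) ?_⟩
  · rintro _ ⟨τ, hτ, rfl⟩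
    dsimp only
    split_ifs
    · exact (hs.1 (mem_image_of_mem G hτ)).trans (le_max_left _ _)
    · exact le_max_right _ _
  · have hcb : c ≤ b := by simpa using hb (mem_image_of_mem _ ⟨htT, le_rfl⟩)
    rintro _ ⟨τ, hτ, rfl⟩
    rcases hτ.2.lt_or_eq with hτT | rfl
    · simpa [hτT] using hb (mem_image_of_mem _ hτ)
    · exact hc.trans hcb
  · simpa using hb (mem_image_of_mem _ ⟨htT, le_rfl⟩)

lemma ContinuousOn.primitive {E : Type*} [NormedAddCommGroup E] [NormedSpace ℝ E] {f : ℝ → E}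
    {a b : ℝ} (hf : ContinuousOn f (Icc a b)) :
    ContinuousOn (fun x => ∫ s in a..x, f s) (Icc a b) := by
  rcases lt_or_ge b a with hba | hab
  · simp [Icc_eq_empty_of_lt hba]
  have hf' : MeasureTheory.IntegrableOn f (uIcc a b) := by
    rw [uIcc_of_le hab]
    exact hf.integrableOn_Icc
  simpa [uIcc_of_le hab] using continuousOn_primitive_interval hf'

lemma sSup_image_integral_add_ite {ψ g : ℝ → ℝ} {a t T : ℝ}
    (hψ : ContinuousOn ψ (Icc a T)) (hg : ContinuousOn g (Icc a T)) (hgT : g T ≤ 0)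
    (ht : t ∈ Icc a T) :
    sSup ((fun τ => (∫ s in t..τ, ψ s) + (if τ < T then g τ else 0)) '' Icc t T) =
      max (sSup ((fun τ => (∫ s in a..τ, ψ s) + g τ) '' Icc t T)) (∫ s in a..T, ψ s) -
        ∫ s in a..t, ψ s := by
  set F := fun x => ∫ s in a..x, ψ s
  have hFc : ContinuousOn F (Icc a T) := hψ.primitive
  have hint : ∀ x ∈ Icc a T, IntervalIntegrable ψ MeasureTheory.volume a x := fun x hx =>
    (hψ.mono (Icc_subset_Icc_right hx.2)).intervalIntegrable_of_Icc hx.1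
  have hsup : IsLUB ((fun τ => F τ + g τ) '' Icc t T) (sSup ((fun τ => F τ + g τ) '' Icc t T)) :=
    (isCompact_Icc.image_of_continuousOn ((hFc.add hg).mono (Icc_subset_Icc_left ht.1))
      ).isLUB_sSup ((nonempty_Icc.2 ht.2).image _)
  have hcap := isLUB_image_ite_lt ht.2 hsup (c := F T) (by linarith)
  have hshift := (OrderIso.addRight (-F t)).isLUB_image'.2 hcap
  rw [image_image] at hshift
  have hval := hshift.csSup_eq ((nonempty_Icc.2 ht.2).image _)
  rw [OrderIso.addRight_apply, ← sub_eq_add_neg] at hval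
  rw [← hval]
  congr 1
  refine image_congr fun τ (hτ : τ ∈ Icc t T) => ?_
  have hFτ : (∫ s in t..τ, ψ s) = F τ - F t :=
    (integral_interval_sub_left (hint τ ⟨ht.1.trans hτ.1, hτ.2⟩) (hint t ht)).symm
  simp only [OrderIso.addRight_apply, hFτ]
  split_ifs with hτT
  · ring
  · obtain rfl : τ = T := le_antisymm hτ.2 (not_lt.1 hτT)
    ring

theorem stmt11 (T : ℝ) (hT : 0 < T) (ψ g : ℝ → ℝ)
    (hψ : ContinuousOn ψ (Icc 0 T)) (hg : ContinuousOn g (Icc 0 T)) (hgT : g T < 0)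
    (v : ℝ → ℝ)
    (hv : ∀ t ∈ Icc (0:ℝ) T, v t =
      sSup ((fun τ => (∫ s in t..τ, ψ s) + (if τ < T then g τ else 0)) '' Icc t T)) :
    ContinuousOn v (Icc 0 T) ∧ v T = 0 := by
  set F := fun x => ∫ s in (0:ℝ)..x, ψ s
  have hv' : EqOn v (fun t => max (sSup ((fun τ => F τ + g τ) '' Icc t T)) (F T) - F t)
      (Icc 0 T) := fun t ht => (hv t ht).trans (sSup_image_integral_add_ite hψ hg hgT.le ht)
  refine ⟨?_, ?_⟩
  · have hrun : ContinuousOn (fun t => sSup ((fun τ => F τ + g τ) '' Icc t T)) (Icc 0 T) :=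
      (hψ.primitive.add hg).sSup_image_Icc_right
    exact ((hrun.sup continuousOn_const).sub hψ.primitive).congr hv'
  · rw [hv' ⟨hT.le, le_rfl⟩]
    simp only [Icc_self, image_singleton, csSup_singleton]
    rw [max_eq_right (by linarith), sub_self]
end
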